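/- arXiv:2506.12784 — 4 statements merged into one kernel-verified Lean document; each statement's English description precedes it below -/
import Mathlib

section
/- Let f : I → ℝ be defined on a finite nonempty set I, and let α → ∞. For each x define W_α(x) = exp(α · h(x) + s(x)) where h : I → ℕ and s : I → ℝ. Then lim_{α→∞} W_α(x) / (∑_{y ∈ I} W_α(y)) is nonzero if and only if h(x) = max_{y ∈ I} h(y); and in that case the limit equals exp(s(x)) / ∑_{y : h(y) = max h} exp(s(y)). -/
/-! Dividing numerator and denominator by `exp (α * max h)` turns every term with `h y < max h`
into `exp (α * (h y - max h) + s y) → 0` and leaves every term with `h y = max h` equal to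
`exp (s y)`; the denominator tends to a positive limit, so the quotient converges. -/

open Filter Topology Finset Real

lemma tendsto_exp_mul_add_of_nonpos {c : ℝ} (hc : c ≤ 0) (b : ℝ) :
    Tendsto (fun α : ℝ => exp (α * c + b)) atTop (𝓝 (if c = 0 then exp b else 0)) := by
  split_ifs with hc0
  · simp [hc0]
  · have hlin : Tendsto (fun α : ℝ => α * c + b) atTop atBot :=
      tendsto_atBot_add_const_right _ b (tendsto_id.atTop_mul_const_of_neg (hc.lt_of_ne hc0))
    exact tendsto_exp_atBot.comp hlin

lemma exp_mul_add_div_sum_exp_eq {I : Type*} [Fintype I] (a b : I → ℝ) (M α : ℝ) (x : I) :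
    exp (α * a x + b x) / ∑ y, exp (α * a y + b y) =
      exp (α * (a x - M) + b x) / ∑ y, exp (α * (a y - M) + b y) := by
  have hshift : ∀ y, exp (α * (a y - M) + b y) = exp (α * a y + b y) * exp (-(α * M)) := by
    intro y
    rw [← exp_add]
    ring_nf
  simp only [hshift, ← sum_mul]
  rw [mul_div_mul_right _ _ (exp_ne_zero _)]

lemma sum_filter_exp_pos {I : Type*} [Fintype I] {p : I → Prop} [DecidablePred p]
    (b : I → ℝ) (hp : ∃ z, p z) : 0 < ∑ y ∈ univ.filter p, exp (b y) := by
  obtain ⟨z, hz⟩ := hp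
  exact sum_pos' (fun y _ => (exp_pos _).le) ⟨z, by simpa using hz, exp_pos _⟩

theorem tendsto_exp_mul_add_div_sum_exp {I : Type*} [Fintype I] {a : I → ℝ} (b : I → ℝ)
    {M : ℝ} [DecidablePred (a · = M)] (ha : ∀ y, a y ≤ M) (hM : ∃ z, a z = M) (x : I) :
    Tendsto (fun α => exp (α * a x + b x) / ∑ y, exp (α * a y + b y)) atTop
      (𝓝 ((if a x = M then exp (b x) else 0) / ∑ y ∈ univ.filter (a · = M), exp (b y))) := by
  have hterm : ∀ y, Tendsto (fun α => exp (α * (a y - M) + b y)) atTop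
      (𝓝 (if a y = M then exp (b y) else 0)) := by
    intro y
    simpa only [sub_eq_zero] using tendsto_exp_mul_add_of_nonpos (sub_nonpos.2 (ha y)) (b y)
  have hsum : Tendsto (fun α => ∑ y, exp (α * (a y - M) + b y)) atTop
      (𝓝 (∑ y ∈ univ.filter (a · = M), exp (b y))) := by
    rw [sum_filter]
    exact tendsto_finsetSum _ fun y _ => hterm y
  refine ((hterm x).div hsum (sum_filter_exp_pos b hM).ne').congr fun α => ?_
  exact (exp_mul_add_div_sum_exp_eq a b M α x).symm

theorem stmt_5_general {I : Type} [Fintype I]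
    (h : I → ℕ) (s : I → ℝ) (x : I) :
    ((∃ L : ℝ, L ≠ 0 ∧ Filter.Tendsto
        (fun α : ℝ => Real.exp (α * (h x : ℝ) + s x) / ∑ y : I, Real.exp (α * (h y : ℝ) + s y))
        Filter.atTop (nhds L)) ↔ h x = Finset.univ.sup h) ∧
    (h x = Finset.univ.sup h →
      Filter.Tendsto
        (fun α : ℝ => Real.exp (α * (h x : ℝ) + s x) / ∑ y : I, Real.exp (α * (h y : ℝ) + s y))
        Filter.atTop
        (nhds (Real.exp (s x) /
          ∑ y ∈ Finset.univ.filter (fun y => h y = Finset.univ.sup h), Real.exp (s y)))) := by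
  obtain ⟨z, -, hz⟩ := exists_mem_eq_sup univ ⟨x, mem_univ x⟩ h
  have hmax : ∃ z, h z = univ.sup h := ⟨z, hz.symm⟩
  have hlim := tendsto_exp_mul_add_div_sum_exp (a := fun y => (h y : ℝ)) s
    (M := (univ.sup h : ℕ)) (fun y => Nat.cast_le.2 (le_sup (mem_univ y)))
    (hmax.imp fun _ => congrArg Nat.cast) x
  simp only [Nat.cast_inj] at hlim
  refine ⟨⟨fun ⟨L, hL, hL_lim⟩ => ?_, fun hx => ?_⟩, fun hx => ?_⟩
  · by_contra hx
    rw [if_neg hx, zero_div] at hlim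
    exact hL (tendsto_nhds_unique hL_lim hlim)
  · rw [if_pos hx] at hlim
    exact ⟨_, div_ne_zero (exp_ne_zero _) (sum_filter_exp_pos s hmax).ne', hlim⟩
  · rwa [if_pos hx] at hlim

theorem stmt_5 {I : Type} [Fintype I] [Nonempty I]
    (h : I → ℕ) (s : I → ℝ) (x : I) :
    ((∃ L : ℝ, L ≠ 0 ∧ Filter.Tendsto
        (fun α : ℝ => Real.exp (α * (h x : ℝ) + s x) / ∑ y : I, Real.exp (α * (h y : ℝ) + s y))
        Filter.atTop (nhds L)) ↔ h x = Finset.univ.sup h) ∧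
    (h x = Finset.univ.sup h →
      Filter.Tendsto
        (fun α : ℝ => Real.exp (α * (h x : ℝ) + s x) / ∑ y : I, Real.exp (α * (h y : ℝ) + s y))
        Filter.atTop
        (nhds (Real.exp (s x) /
          ∑ y ∈ Finset.univ.filter (fun y => h y = Finset.univ.sup h), Real.exp (s y)))) :=
  stmt_5_general h s x
end

section
/- Let h : I → ℕ and s : I → ℝ on a finite nonempty set I, and suppose at least one element attains max h. Then x maximizes lim_{α→∞} exp(α h(x) + s(x)) / ∑_y exp(α h(y) + s(y)) if and only if x is lexicographically optimal: h(x) = max h and s(x) = max {s(y) | h(y) = max h}. -/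
theorem stmt_6 {I : Type} [Fintype I] [Nonempty I]
    (h : I → ℕ) (s : I → ℝ) (P : I → ℝ)
    (hmax : ∃ y : I, h y = Finset.univ.sup h)
    (hP : ∀ y : I, Filter.Tendsto
      (fun α : ℝ => Real.exp (α * (h y : ℝ) + s y) / ∑ z : I, Real.exp (α * (h z : ℝ) + s z))
      Filter.atTop (nhds (P y)))
    (x : I) :
    (∀ y : I, P y ≤ P x) ↔
      (h x = Finset.univ.sup h ∧ ∀ y : I, h y = Finset.univ.sup h → s y ≤ s x) := by
  classical
  set H := Finset.univ.sup h with hH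
  obtain ⟨y0, hy0⟩ := hmax
  set S := Finset.univ.filter (fun z => h z = H) with hS
  have hy0S : y0 ∈ S := by simp [hS, hy0]
  set D : ℝ := ∑ z ∈ S, Real.exp (s z) with hD
  have hDpos : 0 < D := Finset.sum_pos (fun z _ => Real.exp_pos _) ⟨y0, hy0S⟩
  -- limit of each rescaled term
  have hf : ∀ y : I, Filter.Tendsto (fun α : ℝ => Real.exp (α * ((h y : ℝ) - H) + s y))
      Filter.atTop (nhds (if h y = H then Real.exp (s y) else 0)) := by
    intro y
    by_cases hy : h y = H
    · simp only [hy, if_pos, sub_self, mul_zero, zero_add]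
      exact tendsto_const_nhds
    · have hlt : (h y : ℝ) - H < 0 := by
        have h1 : h y < H := lt_of_le_of_ne (Finset.le_sup (Finset.mem_univ y)) hy
        have h2 : (h y : ℝ) < H := Nat.cast_lt.mpr h1
        linarith
      simp only [hy, if_neg, not_false_iff]
      have h1 : Filter.Tendsto (fun α : ℝ => α * ((h y : ℝ) - H) + s y)
          Filter.atTop Filter.atBot := by
        apply Filter.tendsto_atBot_add_const_right
        exact Filter.Tendsto.atTop_mul_const_of_neg hlt Filter.tendsto_id
      exact Real.tendsto_exp_atBot.comp h1
  have hsum : Filter.Tendsto (fun α : ℝ => ∑ z : I, Real.exp (α * ((h z : ℝ) - H) + s z))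
      Filter.atTop (nhds D) := by
    have hDeq : D = ∑ z : I, (if h z = H then Real.exp (s z) else 0) := by
      rw [hD, hS, Finset.sum_filter]
    rw [hDeq]
    exact tendsto_finset_sum _ (fun z _ => hf z)
  have hPval : ∀ y : I, P y = if h y = H then Real.exp (s y) / D else 0 := by
    intro y
    have hratio : ∀ α : ℝ,
        Real.exp (α * ((h y : ℝ) - H) + s y) / ∑ z : I, Real.exp (α * ((h z : ℝ) - H) + s z)
        = Real.exp (α * (h y : ℝ) + s y) / ∑ z : I, Real.exp (α * (h z : ℝ) + s z) := by
      intro α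
      have key : ∀ w : I, Real.exp (α * ((h w : ℝ) - H) + s w)
          = Real.exp (α * (h w : ℝ) + s w) * Real.exp (-(α * H)) := by
        intro w; rw [← Real.exp_add]; ring_nf
      simp only [key, ← Finset.sum_mul]
      rw [mul_div_mul_right _ _ (Real.exp_ne_zero _)]
    have hlim : Filter.Tendsto
        (fun α : ℝ => Real.exp (α * ((h y : ℝ) - H) + s y)
          / ∑ z : I, Real.exp (α * ((h z : ℝ) - H) + s z))
        Filter.atTop (nhds ((if h y = H then Real.exp (s y) else 0) / D)) :=
      Filter.Tendsto.div (hf y) hsum hDpos.ne'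
    have hlim2 := hlim.congr hratio
    have := tendsto_nhds_unique (hP y) hlim2
    rw [this]
    by_cases hy : h y = H <;> simp [hy]
  constructor
  · intro hall
    have hPy0 : P y0 = Real.exp (s y0) / D := by rw [hPval y0, if_pos hy0]
    have hpos : 0 < P x := by
      have := hall y0
      rw [hPy0] at this
      exact lt_of_lt_of_le (div_pos (Real.exp_pos _) hDpos) this
    have hxH : h x = H := by
      by_contra hx
      rw [hPval x, if_neg hx] at hpos
      exact lt_irrefl 0 hpos
    refine ⟨hxH, fun y hy => ?_⟩
    have := hall y
    rw [hPval y, if_pos hy, hPval x, if_pos hxH] at this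
    have := (div_le_div_iff_of_pos_right hDpos).mp this
    exact (Real.exp_le_exp).mp this
  · rintro ⟨hxH, hsx⟩
    intro y
    rw [hPval x, if_pos hxH]
    by_cases hy : h y = H
    · rw [hPval y, if_pos hy]
      gcongr
      exact hsx y hy
    · rw [hPval y, if_neg hy]
      positivity
end

section
/- Let F be a propositional formula over a finite set of atoms and I an interpretation. Then the reduct of the choice formula F ∨ ¬F relative to I is classically equivalent to the reduct of F relative to I when I ⊨ F, and is equivalent to ⊤ (a tautology satisfied by every interpretation) when I ⊭ F. Consequently, I is a stable model of the conjunction ⋀_{i ∈ ι} (F_i ∨ ¬F_i) iff I is a stable model of ⋀_{i : I ⊨ F_i} F_i. -/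
inductive PropForm (α : Type) : Type
  | atom : α → PropForm α
  | fals : PropForm α
  | conj : PropForm α → PropForm α → PropForm α
  | disj : PropForm α → PropForm α → PropForm α
  | impl : PropForm α → PropForm α → PropForm α

namespace PropForm

/-- Classical satisfaction of a propositional formula by an interpretation. -/
def Sat {α : Type} (I : α → Prop) : PropForm α → Prop
  | atom a => I a
  | fals => False
  | conj F G => Sat I F ∧ Sat I G
  | disj F G => Sat I F ∨ Sat I G
  | impl F G => Sat I F → Sat I G

open Classical in
/-- The Ferraris reduct F^I: replace maximal subformulas not satisfied by I with ⊥. -/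
noncomputable def reduct {α : Type} (I : α → Prop) : PropForm α → PropForm α
  | atom a => if I a then atom a else fals
  | fals => fals
  | conj F G => if Sat I (conj F G) then conj (reduct I F) (reduct I G) else fals
  | disj F G => if Sat I (disj F G) then disj (reduct I F) (reduct I G) else fals
  | impl F G => if Sat I (impl F G) then impl (reduct I F) (reduct I G) else fals

def neg {α : Type} (F : PropForm α) : PropForm α := impl F fals

/-- The choice formula {F}^ch = F ∨ ¬F. -/
def choice {α : Type} (F : PropForm α) : PropForm α := disj F (neg F)

def top {α : Type} : PropForm α := impl fals fals

def bigConj {α : Type} (l : List (PropForm α)) : PropForm α := l.foldr conj top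

/-- I is a stable model of F: I is a minimal model of the reduct F^I. -/
noncomputable def StableModel {α : Type} (I : α → Prop) (F : PropForm α) : Prop :=
  Sat I (reduct I F) ∧
    ∀ J : α → Prop, (∀ a, J a → I a) → Sat J (reduct I F) → ∀ a, I a → J a

end PropForm

/-!
The reduct of `F ∨ ¬F` relative to `I` is `F^I ∨ ⊥` when `I ⊨ F` and `⊥ ∨ ¬⊥` otherwise. Every
conjunct of the choice program is satisfied by `I`, so its reduct is the conjunction of the reducts
of its conjuncts and has exactly the models of the reduct of `⋀_{I ⊨ F_i} F_i`. Stability depends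
only on the models of the reduct.
-/

namespace PropForm

variable {α : Type} {I J : α → Prop}

theorem reduct_of_not_sat {G : PropForm α} (h : ¬ Sat I G) : reduct I G = fals := by
  cases G with
  | fals => rfl
  | _ => exact if_neg h

theorem sat_choice (G : PropForm α) : Sat I (choice G) := em (Sat I G)

theorem reduct_conj_of_sat {G H : PropForm α} (hG : Sat I G) (hH : Sat I H) :
    reduct I (conj G H) = conj (reduct I G) (reduct I H) :=
  if_pos ⟨hG, hH⟩

theorem sat_reduct_top : Sat J (reduct I (top : PropForm α)) := by
  simp [top, reduct, Sat]

theorem reduct_choice (G : PropForm α) :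
    reduct I (choice G) = disj (reduct I G) (reduct I (neg G)) :=
  if_pos (sat_choice G)

theorem sat_reduct_choice_of_sat {G : PropForm α} (h : Sat I G) :
    Sat J (reduct I (choice G)) ↔ Sat J (reduct I G) := by
  have hneg : ¬ Sat I (neg G) := fun hn => hn h
  simp [reduct_choice, reduct_of_not_sat hneg, Sat]

theorem sat_reduct_choice_of_not_sat {G : PropForm α} (h : ¬ Sat I G) :
    Sat J (reduct I (choice G)) := by
  have hneg : reduct I (neg G) = neg fals := by
    rw [neg, reduct, if_pos (show Sat I (impl G fals) from h), reduct_of_not_sat h]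
    rfl
  rw [reduct_choice, hneg]
  exact Or.inr id

theorem sat_bigConj {l : List (PropForm α)} : Sat I (bigConj l) ↔ ∀ G ∈ l, Sat I G := by
  induction l with
  | nil => simp [bigConj, top, Sat]
  | cons G l ih => simp [bigConj, Sat, ← ih]

theorem sat_reduct_bigConj {l : List (PropForm α)} (h : ∀ G ∈ l, Sat I G) :
    Sat J (reduct I (bigConj l)) ↔ ∀ G ∈ l, Sat J (reduct I G) := by
  induction l with
  | nil => exact ⟨fun _ => by simp, fun _ => sat_reduct_top⟩
  | cons G l ih =>
    simp only [List.forall_mem_cons] at h ⊢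
    change Sat J (reduct I (conj G (bigConj l))) ↔ _
    rw [reduct_conj_of_sat h.1 (sat_bigConj.mpr h.2), Sat, ih h.2]

theorem sat_reduct_bigConj_map_choice {ι : Type} (F : ι → PropForm α) (l : List ι) :
    Sat J (reduct I (bigConj (l.map fun i => choice (F i)))) ↔
      ∀ i ∈ l, Sat I (F i) → Sat J (reduct I (F i)) := by
  rw [sat_reduct_bigConj (by simp [sat_choice]), List.forall_mem_map]
  refine forall₂_congr fun i _ => ?_
  by_cases hi : Sat I (F i)
  · simp [hi, sat_reduct_choice_of_sat hi]
  · simp [hi, sat_reduct_choice_of_not_sat hi]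

theorem stableModel_congr {G H : PropForm α}
    (h : ∀ J, Sat J (reduct I G) ↔ Sat J (reduct I H)) :
    StableModel I G ↔ StableModel I H := by
  simp only [StableModel, h]

end PropForm

open PropForm in
open scoped Classical in
theorem stmt_13 {α ι : Type} [Fintype ι] (F : ι → PropForm α) (I : α → Prop) :
    (∀ G : PropForm α, Sat I G →
      ∀ J : α → Prop, (Sat J (reduct I (choice G)) ↔ Sat J (reduct I G))) ∧
    (∀ G : PropForm α, ¬ Sat I G → ∀ J : α → Prop, Sat J (reduct I (choice G))) ∧
    (StableModel I (bigConj ((Finset.univ : Finset ι).toList.map (fun i => choice (F i)))) ↔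
      StableModel I
        (bigConj (((Finset.univ : Finset ι).filter (fun i => Sat I (F i))).toList.map F))) := by
  refine ⟨fun _ hG _ => sat_reduct_choice_of_sat hG, fun _ hG _ => sat_reduct_choice_of_not_sat hG,
    stableModel_congr fun J => ?_⟩
  have hfilter : ∀ G ∈ ((Finset.univ.filter fun i => Sat I (F i)).toList.map F), Sat I G := by
    simp
  rw [sat_reduct_bigConj_map_choice, sat_reduct_bigConj hfilter]
  simp
end

section
/- Let ι be finite, w : ι → ℝ, and consider interpretations over atoms σ extended by fresh atoms unsat(i) for i ∈ ι. Suppose for each x in a set I of σ-interpretations we define φ(x) over the extended signature by φ(x) ⊨ unsat(i) iff x violates rule i (i.e., ¬ sat x i). Then for the penalty function Pen(y) = ∑_{i : y ⊨ unsat(i)} w i on extended interpretations, Pen(φ x) = ∑_{i : ¬ sat x i} w i, and x ↦ φ(x) gives a bijection between argmax over I of ∑_{i : sat x i} w i and argmin over φ(I) of Pen. -/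
theorem stmt_14 {ι X Y : Type} [Fintype ι] [Fintype X] [Nonempty X]
    (w : ι → ℝ) (sat : X → ι → Prop) [∀ x, DecidablePred (sat x)]
    (usat : Y → ι → Prop) [∀ y, DecidablePred (usat y)]
    (φ : X → Y) (hinj : Function.Injective φ)
    (hφ : ∀ (x : X) (i : ι), usat (φ x) i ↔ ¬ sat x i) :
    (∀ x : X, ∑ i ∈ Finset.univ.filter (usat (φ x)), w i =
        ∑ i ∈ Finset.univ.filter (fun i => ¬ sat x i), w i) ∧
    Set.BijOn φ
      {x : X | ∀ x' : X,
        ∑ i ∈ Finset.univ.filter (sat x'), w i ≤ ∑ i ∈ Finset.univ.filter (sat x), w i}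
      {y : Y | y ∈ Set.range φ ∧ ∀ y' ∈ Set.range φ,
        ∑ i ∈ Finset.univ.filter (usat y), w i ≤ ∑ i ∈ Finset.univ.filter (usat y'), w i} := by
  have hpen : ∀ x : X, ∑ i ∈ Finset.univ.filter (usat (φ x)), w i =
      ∑ i ∈ Finset.univ.filter (fun i => ¬ sat x i), w i := by
    intro x
    apply Finset.sum_congr _ (fun _ _ => rfl)
    ext i
    simp [hφ]
  have hsplit : ∀ x : X, ∑ i ∈ Finset.univ.filter (sat x), w i +
      ∑ i ∈ Finset.univ.filter (fun i => ¬ sat x i), w i = ∑ i : ι, w i := by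
    intro x
    rw [Finset.sum_filter_add_sum_filter_not]
  -- key equivalence
  have key : ∀ x : X, (∀ x' : X, ∑ i ∈ Finset.univ.filter (sat x'), w i ≤
        ∑ i ∈ Finset.univ.filter (sat x), w i) ↔
      (∀ x' : X, ∑ i ∈ Finset.univ.filter (usat (φ x)), w i ≤
        ∑ i ∈ Finset.univ.filter (usat (φ x')), w i) := by
    intro x
    constructor <;> intro h x' <;> have h' := h x' <;>
      rw [hpen, hpen] at * <;> nlinarith [hsplit x, hsplit x']
  refine ⟨hpen, ⟨?_, hinj.injOn, ?_⟩⟩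
  · intro x hx
    refine ⟨⟨x, rfl⟩, ?_⟩
    rintro y' ⟨x', rfl⟩
    exact (key x).1 hx x'
  · rintro y ⟨⟨x, rfl⟩, hy⟩
    refine ⟨x, ?_, rfl⟩
    exact (key x).2 (fun x' => hy _ ⟨x', rfl⟩)
end
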